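/- Let (f_n)_{n∈ℕ} be a sequence in SV_d(X) converging to f ∈ SV_d(X) in the ‖·‖_{SV_d} norm, and let (μ_n)_{n∈ℕ} be Borel probability measures on X converging weakly to μ, such that each μ_n is a topological Gibbs measure for f_n. Then μ is a topological Gibbs measure for f. -/

import Mathlib

open MeasureTheory Filter Topology

/-- The full shift configuration space `𝒜^{ℤ^d}`. -/
abbrev Config (d : ℕ) (A : Type*) := (Fin d → ℤ) → A

/-- The shift action of `ℤ^d`: `(T^k x)_i = x_{i+k}`. -/
def shift {d : ℕ} {A : Type*} (k : Fin d → ℤ) (x : Config d A) : Config d A :=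
  fun i => x (i + k)

/-- The ℓ∞ norm of a lattice point, `‖k‖_∞ = max_i |k_i|`. -/
def normInf {d : ℕ} (k : Fin d → ℤ) : ℕ :=
  Finset.univ.sup fun i => (k i).natAbs

/-- The box `Λ_N = {k : ‖k‖_∞ ≤ N}` as a finset. -/
noncomputable def boxF (d N : ℕ) : Finset (Fin d → ℤ) :=
  Finset.Icc (fun _ => -(N : ℤ)) (fun _ => (N : ℤ))

/-- The `n`-th variation of `f` on a subshift `X`:
`δ_n(f) = sup {|f x - f y| : x, y ∈ X, x_{Λ_n} = y_{Λ_n}}`. -/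
noncomputable def deltaVar {d : ℕ} {A : Type*} (X : Set (Config d A))
    (f : Config d A → ℝ) (n : ℕ) : ℝ :=
  sSup {r : ℝ | ∃ x ∈ X, ∃ y ∈ X,
    (∀ k : Fin d → ℤ, normInf k ≤ n → x k = y k) ∧ r = |f x - f y|}

/-- `f` is bounded on `X`. -/
def BoundedOn {d : ℕ} {A : Type*} (X : Set (Config d A)) (f : Config d A → ℝ) : Prop :=
  ∃ C : ℝ, ∀ x ∈ X, |f x| ≤ C

/-- Membership in `SV_d(X)`: bounded with `Σ_{n ≥ 1} n^{d-1} δ_n(f) < ∞`. -/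
def MemSV (d : ℕ) {A : Type*} (X : Set (Config d A)) (f : Config d A → ℝ) : Prop :=
  BoundedOn X f ∧ Summable fun n : ℕ => ((n : ℝ) + 1) ^ (d - 1) * deltaVar X f (n + 1)

/-- The sup norm of `f` over `X`. -/
noncomputable def supNormOn {d : ℕ} {A : Type*} (X : Set (Config d A))
    (f : Config d A → ℝ) : ℝ :=
  sSup {r : ℝ | ∃ x ∈ X, r = |f x|}

/-- The `SV_d` norm: `‖f‖_{SV_d} = ‖f‖_∞ + Σ_{n ≥ 1} n^{d-1} δ_n(f)`. -/
noncomputable def svNorm (d : ℕ) {A : Type*} (X : Set (Config d A))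
    (f : Config d A → ℝ) : ℝ :=
  supNormOn X f + ∑' n : ℕ, ((n : ℝ) + 1) ^ (d - 1) * deltaVar X f (n + 1)

/-- The Gibbs relation `𝔗`: pairs of points of `X` that agree outside a finite set. -/
def gibbsRel {d : ℕ} {A : Type*} (X : Set (Config d A)) :
    Set (Config d A × Config d A) :=
  {p | p.1 ∈ X ∧ p.2 ∈ X ∧ ∃ Λ : Finset (Fin d → ℤ), ∀ k ∉ Λ, p.1 k = p.2 k}

/-- The cocycle `φ_f(x,y) = Σ_{k ∈ ℤ^d} (f(T^k y) - f(T^k x))` (unordered sum). -/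
noncomputable def phiF {d : ℕ} {A : Type*} (f : Config d A → ℝ)
    (x y : Config d A) : ℝ :=
  ∑' k : Fin d → ℤ, (f (shift k y) - f (shift k x))

/-- Membership in `𝓕(X)`: homeomorphisms of `X` changing only finitely many coordinates,
uniformly. -/
def memF {d : ℕ} {A : Type*} [TopologicalSpace A] (X : Set (Config d A))
    (φ : ↥X ≃ₜ ↥X) : Prop :=
  ∃ n : ℕ, 1 ≤ n ∧ ∀ x : ↥X, ∀ k : Fin d → ℤ, n < normInf k → (φ x).1 k = x.1 k

/-- `𝓕_n(X)`. -/
def Fn {d : ℕ} {A : Type*} [TopologicalSpace A] (X : Set (Config d A)) (n : ℕ) :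
    Set (↥X ≃ₜ ↥X) :=
  {φ | (∀ x : ↥X, ∀ k : Fin d → ℤ, n < normInf k → (φ x).1 k = x.1 k) ∧
    ∀ x y : ↥X,
      ((∀ k : Fin d → ℤ, normInf k ≤ n → x.1 k = y.1 k) ↔
        (∀ k : Fin d → ℤ, normInf k ≤ n → (φ x).1 k = (φ y).1 k))}

/-- The configuration `ω x_{Λ^c}`: equal to `ω` on `Λ` and to `x` off `Λ`. -/
def patch {d : ℕ} {A : Type*} (Λ : Finset (Fin d → ℤ)) (ω : {k // k ∈ Λ} → A)
    (x : Config d A) : Config d A :=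
  fun k => if h : k ∈ Λ then ω ⟨k, h⟩ else x k

/-- `f_n = Σ_{i ∈ Λ_n} f ∘ T^i`. -/
noncomputable def fnSum (d : ℕ) {A : Type*} (f : Config d A → ℝ) (n : ℕ)
    (z : Config d A) : ℝ :=
  ∑ i ∈ boxF d n, f (shift i z)

/-- The σ-algebra `𝓕_Δ` on `X`, generated by the coordinate projections `x ↦ x_i`, `i ∈ Δ`. -/
def cylSigma {d : ℕ} {A : Type*} [MeasurableSpace A] (X : Set (Config d A))
    (Δ : Set (Fin d → ℤ)) : MeasurableSpace ↥X :=
  MeasurableSpace.comap (fun (x : ↥X) (i : ↥Δ) => x.1 i.1) MeasurableSpace.pi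

/-- `μ` is a Gibbs measure for `f`: `(φ_f, 𝔗)`-conformal. -/
def IsGibbs (d : ℕ) {A : Type*} [MeasurableSpace A] (X : Set (Config d A))
    (f : Config d A → ℝ) (μ : Measure ↥X) : Prop :=
  ∀ V W : ↥X → ↥X, Measurable V → Measurable W →
    (∀ x, W (V x) = x) → (∀ x, V (W x) = x) →
    (∀ x : ↥X, ((x.1, (V x).1) ∈ gibbsRel X)) →
    (Measure.map V μ ≪ μ ∧
      ∀ᵐ x ∂μ, (Measure.map V μ).rnDeriv μ x
        = ENNReal.ofReal (Real.exp (phiF f x.1 (W x).1)))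

/-- `μ` is a topological Gibbs measure for `f`: `(φ_f|_{𝔗⁰}, 𝔗⁰)`-conformal. -/
def IsTopGibbs (d : ℕ) {A : Type*} [TopologicalSpace A] [MeasurableSpace A]
    (X : Set (Config d A)) (f : Config d A → ℝ) (μ : Measure ↥X) : Prop :=
  ∀ φ : ↥X ≃ₜ ↥X, memF X φ →
    (Measure.map (⇑φ) μ ≪ μ ∧
      ∀ᵐ x ∂μ, (Measure.map (⇑φ) μ).rnDeriv μ x
        = ENNReal.ofReal (Real.exp (phiF f x.1 (φ.symm x).1)))

/-- Finite-volume Gibbsian ratios defining the kernel `γ_Λ`. -/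
noncomputable def gammaFn (d : ℕ) {A : Type*} [Fintype A] (X : Set (Config d A))
    (f : Config d A → ℝ) (Λ : Finset (Fin d → ℤ)) (S : Set ↥X) (x : Config d A)
    (n : ℕ) : ℝ :=
  (∑ ω : {k // k ∈ Λ} → A,
      (Subtype.val '' S).indicator (fun z => Real.exp (fnSum d f n z)) (patch Λ ω x)) /
  (∑ η : {k // k ∈ Λ} → A,
      X.indicator (fun z => Real.exp (fnSum d f n z)) (patch Λ η x))

/-- The kernel `γ_Λ(S | x)`, defined as the limit of the finite-volume ratios. -/
noncomputable def gamma (d : ℕ) {A : Type*} [Fintype A] (X : Set (Config d A))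
    (f : Config d A → ℝ) (Λ : Finset (Fin d → ℤ)) (S : Set ↥X) (x : Config d A) : ℝ :=
  limUnder atTop (gammaFn d X f Λ S x)

/-- `X` is a subshift of finite type. -/
def IsSFT {d : ℕ} {A : Type*} (X : Set (Config d A)) : Prop :=
  ∃ n : ℕ, 1 ≤ n ∧ ∃ F : Set ({k : Fin d → ℤ // normInf k ≤ n} → A),
    X = {x : Config d A |
      ∀ l : Fin d → ℤ, (fun k : {k : Fin d → ℤ // normInf k ≤ n} => shift l x k.1) ∉ F}

/-- The topological Gibbs relation `𝔗⁰`. -/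
def topGibbsRel {d : ℕ} {A : Type*} [TopologicalSpace A] (X : Set (Config d A)) :
    Set (Config d A × Config d A) :=
  {p | ∃ (hx : p.1 ∈ X) (φ : ↥X ≃ₜ ↥X), memF X φ ∧ (φ ⟨p.1, hx⟩).1 = p.2}

/-- `f` is a local function on `X`. -/
def IsLocal {d : ℕ} {A : Type*} (X : Set (Config d A)) (f : Config d A → ℝ) : Prop :=
  ∃ Λ : Finset (Fin d → ℤ), ∀ x ∈ X, ∀ y ∈ X, (∀ k ∈ Λ, x k = y k) → f x = f y

/-!
Fix `φ ∈ 𝓕(X)` moving only sites of `Λ_n`, and write `ρ_f(x) = φ_f(x, φ⁻¹x)`. The `k`-th term of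
this series is at most `2‖f‖_∞` when `‖k‖_∞ ≤ n + 1` and at most `δ_{‖k‖_∞ - n - 1}(f)` beyond,
and there are `O(m^{d-1})` sites with `‖k‖_∞ = m`; so the series converges uniformly, `ρ_f` is
continuous on `X`, and `|ρ_f - ρ_g| ≤ C_n ‖f - g‖_{SV_d}`.

On the compact space `X`, the Gibbs property along `φ` says `φ_*μ = e^{ρ_f} μ`, i.e.
`∫ g ∘ φ dμ = ∫ g e^{ρ_f} dμ` for all continuous `g`. This holds for `μ_n` with `f_n`; as
`e^{ρ_{f_n}} → e^{ρ_f}` uniformly and `μ_n → μ` weakly, both sides pass to the limit.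
-/

section Lattice

variable {d : ℕ}

lemma mem_boxF {N : ℕ} {k : Fin d → ℤ} : k ∈ boxF d N ↔ normInf k ≤ N := by
  simp only [boxF, Finset.mem_Icc, normInf, Finset.sup_le_iff, Finset.mem_univ, true_imp_iff,
    Pi.le_def]
  constructor
  · rintro ⟨h1, h2⟩ i; have := h1 i; have := h2 i; omega
  · intro h; exact ⟨fun i => by have := h i; omega, fun i => by have := h i; omega⟩

lemma normInf_le_normInf_add_add (i k : Fin d → ℤ) :
    normInf k ≤ normInf (i + k) + normInf i := by
  refine Finset.sup_le fun j _ => ?_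
  have h1 : (i j + k j).natAbs ≤ normInf (i + k) :=
    Finset.le_sup (f := fun j => ((i + k) j).natAbs) (Finset.mem_univ j)
  have h2 : (i j).natAbs ≤ normInf i :=
    Finset.le_sup (f := fun j => (i j).natAbs) (Finset.mem_univ j)
  omega

lemma card_boxF (N : ℕ) : (boxF d N).card = (2 * N + 1) ^ d := by
  rw [boxF, Pi.card_Icc]
  simp only [Int.card_Icc, Finset.prod_const, Finset.card_univ, Fintype.card_fin]
  congr 1
  omega

lemma card_filter_normInf_eq_le (s : Finset (Fin d → ℤ)) (m : ℕ) :
    (s.filter fun k => normInf k = m).card ≤ (2 * d + 1) * (2 * m + 1) ^ (d - 1) := by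
  rcases m with _ | m
  · calc (s.filter fun k => normInf k = 0).card
        ≤ (boxF d 0).card :=
          Finset.card_le_card fun k hk => mem_boxF.2 (Finset.mem_filter.1 hk).2.le
      _ ≤ (2 * d + 1) * (2 * 0 + 1) ^ (d - 1) := by simp [card_boxF]
  · have hsub : (s.filter fun k => normInf k = m + 1) ⊆ boxF d (m + 1) \ boxF d m := by
      intro k hk
      simp only [Finset.mem_filter, Finset.mem_sdiff, mem_boxF] at hk ⊢
      omega
    have hbox : boxF d m ⊆ boxF d (m + 1) := fun k hk =>
      mem_boxF.2 (by have := mem_boxF.1 hk; omega)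
    have hshell : ((2 * m + 3) ^ d - (2 * m + 1) ^ d : ℤ) ≤ 2 * d * (2 * m + 3) ^ (d - 1) := by
      have := abs_pow_sub_pow_le (2 * m + 3 : ℤ) (2 * m + 1) d
      have htwo : |(2 * m + 3 : ℤ) - (2 * m + 1)| = 2 := by norm_num [add_sub_add_left_eq_sub]
      have hmax : max |(2 * m + 3 : ℤ)| |2 * m + 1| = 2 * m + 3 := by
        rw [abs_of_nonneg (by positivity), abs_of_nonneg (by positivity)]
        exact max_eq_left (by omega)
      rw [htwo, hmax] at this
      exact (le_abs_self _).trans this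
    have hle : (2 * m + 1) ^ d ≤ (2 * m + 3) ^ d := Nat.pow_le_pow_left (by omega) d
    calc (s.filter fun k => normInf k = m + 1).card
        ≤ (boxF d (m + 1) \ boxF d m).card := Finset.card_le_card hsub
      _ = (2 * (m + 1) + 1) ^ d - (2 * m + 1) ^ d := by
          rw [Finset.card_sdiff_of_subset hbox, card_boxF, card_boxF]
      _ ≤ (2 * d + 1) * (2 * (m + 1) + 1) ^ (d - 1) := by
          rw [show 2 * (m + 1) + 1 = 2 * m + 3 by ring]
          zify [hle]
          nlinarith [pow_nonneg (by positivity : (0 : ℤ) ≤ 2 * m + 3) (d - 1)]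

section Summation

variable {u : ℕ → ℝ}

lemma sum_comp_normInf_le (hu : ∀ m, 0 ≤ u m)
    (hs : Summable fun m : ℕ => (2 * m + 1 : ℝ) ^ (d - 1) * u m) (s : Finset (Fin d → ℤ)) :
    ∑ k ∈ s, u (normInf k) ≤ (2 * d + 1) * ∑' m : ℕ, (2 * m + 1 : ℝ) ^ (d - 1) * u m := by
  rw [Finset.sum_comp, ← tsum_mul_left]
  refine le_trans (Finset.sum_le_sum fun m _ => ?_)
    (Summable.sum_le_tsum _ (fun m _ => by have := hu m; positivity) (hs.mul_left _))
  rw [nsmul_eq_mul, ← mul_assoc]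
  refine mul_le_mul_of_nonneg_right ?_ (hu m)
  exact_mod_cast card_filter_normInf_eq_le s m

lemma summable_comp_normInf (hu : ∀ m, 0 ≤ u m)
    (hs : Summable fun m : ℕ => (2 * m + 1 : ℝ) ^ (d - 1) * u m) :
    Summable fun k : Fin d → ℤ => u (normInf k) :=
  summable_of_sum_le (fun _ => hu _) (sum_comp_normInf_le hu hs)

lemma tsum_comp_normInf_le (hu : ∀ m, 0 ≤ u m)
    (hs : Summable fun m : ℕ => (2 * m + 1 : ℝ) ^ (d - 1) * u m) :
    ∑' k : Fin d → ℤ, u (normInf k) ≤ (2 * d + 1) * ∑' m : ℕ, (2 * m + 1 : ℝ) ^ (d - 1) * u m :=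
  (summable_comp_normInf hu hs).tsum_le_of_sum_le (sum_comp_normInf_le hu hs)

end Summation

end Lattice

section Variation

variable {d : ℕ} {A : Type*} {X : Set (Config d A)} {f g : Config d A → ℝ}

lemma supNormOn_nonneg : 0 ≤ supNormOn X f :=
  Real.sSup_nonneg fun _ ⟨_, _, hr⟩ => hr ▸ abs_nonneg _

lemma abs_le_supNormOn (hf : BoundedOn X f) {x : Config d A} (hx : x ∈ X) :
    |f x| ≤ supNormOn X f := by
  obtain ⟨C, hC⟩ := hf
  exact le_csSup ⟨C, by rintro r ⟨z, hz, rfl⟩; exact hC z hz⟩ ⟨x, hx, rfl⟩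

lemma deltaVar_nonneg (n : ℕ) : 0 ≤ deltaVar X f n :=
  Real.sSup_nonneg fun _ ⟨_, _, _, _, _, hr⟩ => hr ▸ abs_nonneg _

lemma abs_sub_le_deltaVar (hf : BoundedOn X f) {n : ℕ} {x y : Config d A} (hx : x ∈ X)
    (hy : y ∈ X) (hxy : ∀ k : Fin d → ℤ, normInf k ≤ n → x k = y k) :
    |f x - f y| ≤ deltaVar X f n := by
  obtain ⟨C, hC⟩ := hf
  refine le_csSup ⟨C + C, ?_⟩ ⟨x, hx, y, hy, hxy, rfl⟩
  rintro r ⟨z, hz, w, hw, -, rfl⟩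
  exact (abs_sub _ _).trans (add_le_add (hC z hz) (hC w hw))

lemma tsum_deltaVar_nonneg :
    0 ≤ ∑' n : ℕ, ((n : ℝ) + 1) ^ (d - 1) * deltaVar X f (n + 1) :=
  tsum_nonneg fun _ => mul_nonneg (by positivity) (deltaVar_nonneg _)

lemma supNormOn_le_svNorm : supNormOn X f ≤ svNorm d X f :=
  le_add_of_nonneg_right tsum_deltaVar_nonneg

lemma tsum_deltaVar_le_svNorm :
    ∑' n : ℕ, ((n : ℝ) + 1) ^ (d - 1) * deltaVar X f (n + 1) ≤ svNorm d X f :=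
  le_add_of_nonneg_left supNormOn_nonneg

lemma svNorm_nonneg : 0 ≤ svNorm d X f :=
  add_nonneg supNormOn_nonneg tsum_deltaVar_nonneg

lemma BoundedOn.sub (hf : BoundedOn X f) (hg : BoundedOn X g) :
    BoundedOn X fun z => f z - g z := by
  obtain ⟨C, hC⟩ := hf
  obtain ⟨D, hD⟩ := hg
  exact ⟨C + D, fun x hx => (abs_sub _ _).trans (add_le_add (hC x hx) (hD x hx))⟩

lemma deltaVar_sub_le (hf : BoundedOn X f) (hg : BoundedOn X g) (n : ℕ) :
    deltaVar X (fun z => f z - g z) n ≤ deltaVar X f n + deltaVar X g n := by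
  refine Real.sSup_le ?_ (add_nonneg (deltaVar_nonneg n) (deltaVar_nonneg n))
  rintro r ⟨x, hx, y, hy, hxy, rfl⟩
  calc |(f x - g x) - (f y - g y)| = |(f x - f y) - (g x - g y)| := by ring_nf
    _ ≤ |f x - f y| + |g x - g y| := abs_sub _ _
    _ ≤ deltaVar X f n + deltaVar X g n :=
        add_le_add (abs_sub_le_deltaVar hf hx hy hxy) (abs_sub_le_deltaVar hg hx hy hxy)

lemma MemSV.sub (hf : MemSV d X f) (hg : MemSV d X g) : MemSV d X fun z => f z - g z := by
  refine ⟨hf.1.sub hg.1, (hf.2.add hg.2).of_nonneg_of_le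
    (fun _ => mul_nonneg (by positivity) (deltaVar_nonneg _)) fun n => ?_⟩
  rw [← mul_add]
  exact mul_le_mul_of_nonneg_left (deltaVar_sub_le hf.1 hg.1 _) (by positivity)

lemma MemSV.tendsto_deltaVar (hf : MemSV d X f) :
    Tendsto (fun n : ℕ => deltaVar X f (n + 1)) atTop (𝓝 0) :=
  squeeze_zero (fun _ => deltaVar_nonneg _)
    (fun n => le_mul_of_one_le_left (deltaVar_nonneg _) (one_le_pow₀ (by simp)))
    hf.2.tendsto_atTop_zero

lemma MemSV.continuous_restrict [TopologicalSpace A] [DiscreteTopology A] (hf : MemSV d X f) :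
    Continuous fun x : ↥X => f x := by
  refine continuous_iff_continuousAt.2 fun x₀ => Metric.tendsto_nhds.2 fun ε hε => ?_
  obtain ⟨n, hn⟩ := (hf.tendsto_deltaVar.eventually (eventually_lt_nhds hε)).exists
  have hcyl : IsOpen {y : ↥X | ∀ i ∈ boxF d (n + 1), y.1 i = x₀.1 i} := by
    have : {y : ↥X | ∀ i ∈ boxF d (n + 1), y.1 i = x₀.1 i}
        = Subtype.val ⁻¹' (Set.pi (boxF d (n + 1) : Set (Fin d → ℤ)) fun i => {x₀.1 i}) := by
      ext y
      simp [Set.mem_pi]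
    rw [this]
    exact (isOpen_set_pi (Finset.finite_toSet _) fun i _ => isOpen_discrete _).preimage
      continuous_subtype_val
  filter_upwards [hcyl.mem_nhds fun i _ => rfl] with y hy
  exact (abs_sub_le_deltaVar hf.1 y.2 x₀.2 fun k hk => hy k (mem_boxF.2 hk)).trans_lt hn

end Variation

section Cocycle

variable {d : ℕ} {A : Type*} {X : Set (Config d A)} {f : Config d A → ℝ}

/-- Bound for `|f (T^k y) - f (T^k x)|` at `‖k‖_∞ = m` when `x, y` agree off `Λ_n`: the shifted
points then agree on `Λ_{m-n-1}`. -/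
noncomputable def cocycleMajorant (X : Set (Config d A)) (f : Config d A → ℝ) (n m : ℕ) : ℝ :=
  if m ≤ n + 1 then 2 * supNormOn X f else deltaVar X f (m - (n + 1))

lemma cocycleMajorant_nonneg (n m : ℕ) : 0 ≤ cocycleMajorant X f n m := by
  unfold cocycleMajorant
  split_ifs
  · exact mul_nonneg zero_le_two supNormOn_nonneg
  · exact deltaVar_nonneg _

lemma abs_sub_le_cocycleMajorant (hinv : ∀ k : Fin d → ℤ, ∀ x ∈ X, shift k x ∈ X)
    (hf : BoundedOn X f) {n : ℕ} {x y : Config d A} (hx : x ∈ X) (hy : y ∈ X)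
    (hxy : ∀ k : Fin d → ℤ, n < normInf k → x k = y k) (k : Fin d → ℤ) :
    |f (shift k y) - f (shift k x)| ≤ cocycleMajorant X f n (normInf k) := by
  unfold cocycleMajorant
  split_ifs with hk
  · calc |f (shift k y) - f (shift k x)| ≤ |f (shift k y)| + |f (shift k x)| := abs_sub _ _
      _ ≤ supNormOn X f + supNormOn X f :=
          add_le_add (abs_le_supNormOn hf (hinv k y hy)) (abs_le_supNormOn hf (hinv k x hx))
      _ = 2 * supNormOn X f := by ring
  · refine abs_sub_le_deltaVar hf (hinv k y hy) (hinv k x hx) fun i hi => ?_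
    have := normInf_le_normInf_add_add i k
    exact (hxy (i + k) (by omega)).symm

lemma weighted_cocycleMajorant_add_le (n j : ℕ) :
    (2 * ((j + (n + 2) : ℕ) : ℝ) + 1) ^ (d - 1) * cocycleMajorant X f n (j + (n + 2))
      ≤ (2 * n + 5 : ℝ) ^ (d - 1) * (((j : ℝ) + 1) ^ (d - 1) * deltaVar X f (j + 1)) := by
  rw [cocycleMajorant, if_neg (by omega), show j + (n + 2) - (n + 1) = j + 1 by omega,
    ← mul_assoc, ← mul_pow]
  refine mul_le_mul_of_nonneg_right (pow_le_pow_left₀ (by positivity) ?_ _) (deltaVar_nonneg _)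
  push_cast
  nlinarith [(j.cast_nonneg : (0 : ℝ) ≤ j), (n.cast_nonneg : (0 : ℝ) ≤ n)]

lemma summable_cocycleMajorant (hf : MemSV d X f) (n : ℕ) :
    Summable fun m : ℕ => (2 * m + 1 : ℝ) ^ (d - 1) * cocycleMajorant X f n m :=
  (summable_nat_add_iff (n + 2)).1 <| (hf.2.mul_left _).of_nonneg_of_le
    (fun _ => mul_nonneg (by positivity) (cocycleMajorant_nonneg _ _))
    (weighted_cocycleMajorant_add_le n)

lemma exists_tsum_cocycleMajorant_le (n : ℕ) : ∃ C : ℝ, ∀ f, MemSV d X f →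
    ∑' m : ℕ, (2 * m + 1 : ℝ) ^ (d - 1) * cocycleMajorant X f n m ≤ C * svNorm d X f := by
  refine ⟨2 * ∑ m ∈ Finset.range (n + 2), (2 * m + 1 : ℝ) ^ (d - 1) + (2 * n + 5) ^ (d - 1),
    fun f hf => ?_⟩
  have hhead : ∑ m ∈ Finset.range (n + 2), (2 * m + 1 : ℝ) ^ (d - 1) * cocycleMajorant X f n m
      = (2 * ∑ m ∈ Finset.range (n + 2), (2 * m + 1 : ℝ) ^ (d - 1)) * supNormOn X f := by
    rw [mul_comm 2, mul_assoc, Finset.sum_mul]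
    exact Finset.sum_congr rfl fun m hm =>
      by rw [cocycleMajorant, if_pos (by simp at hm; omega)]
  have htail : ∑' j : ℕ, (2 * ((j + (n + 2) : ℕ) : ℝ) + 1) ^ (d - 1)
        * cocycleMajorant X f n (j + (n + 2))
      ≤ (2 * n + 5 : ℝ) ^ (d - 1) * svNorm d X f := by
    have hsum := (summable_nat_add_iff (n + 2)).2 (summable_cocycleMajorant hf n)
    refine (Summable.tsum_le_tsum (weighted_cocycleMajorant_add_le n) hsum
      (hf.2.mul_left ((2 * n + 5 : ℝ) ^ (d - 1)))).trans ?_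
    rw [tsum_mul_left]
    exact mul_le_mul_of_nonneg_left tsum_deltaVar_le_svNorm (by positivity)
  rw [← (summable_cocycleMajorant hf n).sum_add_tsum_nat_add (n + 2), hhead, add_mul]
  exact add_le_add (mul_le_mul_of_nonneg_left supNormOn_le_svNorm (by positivity)) htail

end Cocycle

section Phi

variable {d : ℕ} {A : Type*} {X : Set (Config d A)} {f g : Config d A → ℝ} {x y : Config d A}

lemma summable_cocycleMajorant_normInf (hf : MemSV d X f) (n : ℕ) :
    Summable fun k : Fin d → ℤ => cocycleMajorant X f n (normInf k) :=
  summable_comp_normInf (cocycleMajorant_nonneg n) (summable_cocycleMajorant hf n)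

lemma summable_phiF (hinv : ∀ k : Fin d → ℤ, ∀ x ∈ X, shift k x ∈ X) (hf : MemSV d X f) {n : ℕ}
    (hx : x ∈ X) (hy : y ∈ X) (hxy : ∀ k : Fin d → ℤ, n < normInf k → x k = y k) :
    Summable fun k : Fin d → ℤ => f (shift k y) - f (shift k x) :=
  (summable_cocycleMajorant_normInf hf n).of_norm_bounded
    (abs_sub_le_cocycleMajorant hinv hf.1 hx hy hxy)

lemma phiF_sub (hinv : ∀ k : Fin d → ℤ, ∀ x ∈ X, shift k x ∈ X) (hf : MemSV d X f)
    (hg : MemSV d X g) {n : ℕ} (hx : x ∈ X) (hy : y ∈ X)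
    (hxy : ∀ k : Fin d → ℤ, n < normInf k → x k = y k) :
    phiF (fun z => f z - g z) x y = phiF f x y - phiF g x y := by
  rw [phiF, phiF, phiF, ← (summable_phiF hinv hf hx hy hxy).tsum_sub
    (summable_phiF hinv hg hx hy hxy)]
  congr 1 with k
  ring

lemma exists_abs_phiF_le (hinv : ∀ k : Fin d → ℤ, ∀ x ∈ X, shift k x ∈ X) (n : ℕ) :
    ∃ C : ℝ, ∀ f, MemSV d X f → ∀ x ∈ X, ∀ y ∈ X,
      (∀ k : Fin d → ℤ, n < normInf k → x k = y k) → |phiF f x y| ≤ C * svNorm d X f := by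
  obtain ⟨C, hC⟩ := exists_tsum_cocycleMajorant_le (X := X) n
  refine ⟨(2 * d + 1) * C, fun f hf x hx y hy hxy => ?_⟩
  calc |phiF f x y| ≤ ∑' k : Fin d → ℤ, cocycleMajorant X f n (normInf k) := by
        rw [← Real.norm_eq_abs, phiF]
        exact tsum_of_norm_bounded (summable_cocycleMajorant_normInf hf n).hasSum
          (abs_sub_le_cocycleMajorant hinv hf.1 hx hy hxy)
    _ ≤ (2 * d + 1) * ∑' m : ℕ, (2 * m + 1 : ℝ) ^ (d - 1) * cocycleMajorant X f n m :=
        tsum_comp_normInf_le (cocycleMajorant_nonneg n) (summable_cocycleMajorant hf n)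
    _ ≤ (2 * d + 1) * C * svNorm d X f := by
        rw [mul_assoc]
        exact mul_le_mul_of_nonneg_left (hC f hf) (by positivity)

lemma continuous_phiF_comp [TopologicalSpace A] [DiscreteTopology A]
    (hinv : ∀ k : Fin d → ℤ, ∀ x ∈ X, shift k x ∈ X) (hf : MemSV d X f) {n : ℕ}
    {ψ : ↥X → ↥X} (hψ : Continuous ψ)
    (hψn : ∀ x : ↥X, ∀ k : Fin d → ℤ, n < normInf k → x.1 k = (ψ x).1 k) :
    Continuous fun x : ↥X => phiF f x.1 (ψ x).1 := by
  have hshift (k : Fin d → ℤ) : Continuous fun x : ↥X => (⟨shift k x.1, hinv k x.1 x.2⟩ : ↥X) :=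
    have : Continuous fun x : ↥X => shift k x.1 :=
      continuous_pi fun i => (continuous_apply (i + k)).comp continuous_subtype_val
    this.subtype_mk _
  refine continuous_tsum (fun k => ?_) (summable_cocycleMajorant_normInf hf n)
    fun k x => abs_sub_le_cocycleMajorant hinv hf.1 x.2 (ψ x).2 (hψn x) k
  exact (hf.continuous_restrict.comp ((hshift k).comp hψ)).sub
    (hf.continuous_restrict.comp (hshift k))

lemma tendstoUniformly_phiF_comp (hinv : ∀ k : Fin d → ℤ, ∀ x ∈ X, shift k x ∈ X)
    {fs : ℕ → Config d A → ℝ} (hfs : ∀ m, MemSV d X (fs m)) (hf : MemSV d X f)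
    (hconv : Tendsto (fun m => svNorm d X fun z => fs m z - f z) atTop (𝓝 0)) {n : ℕ}
    {ψ : ↥X → ↥X} (hψn : ∀ x : ↥X, ∀ k : Fin d → ℤ, n < normInf k → x.1 k = (ψ x).1 k) :
    TendstoUniformly (fun m (x : ↥X) => phiF (fs m) x.1 (ψ x).1)
      (fun x => phiF f x.1 (ψ x).1) atTop := by
  obtain ⟨C, hC⟩ := exists_abs_phiF_le hinv n
  have hCconv : Tendsto (fun m => C * svNorm d X fun z => fs m z - f z) atTop (𝓝 0) := by
    simpa using hconv.const_mul C
  refine Metric.tendstoUniformly_iff.2 fun ε hε => ?_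
  filter_upwards [hCconv.eventually (gt_mem_nhds hε)] with m hm x
  rw [dist_comm, Real.dist_eq, ← phiF_sub hinv (hfs m) hf x.2 (ψ x).2 (hψn x)]
  exact (hC _ ((hfs m).sub hf) _ x.2 _ (ψ x).2 (hψn x)).trans_lt hm

end Phi

lemma integral_withDensity_exp {Ω : Type*} [MeasurableSpace Ω] (μ : Measure Ω) {ρ : Ω → ℝ}
    (hρ : Measurable ρ) (g : Ω → ℝ) :
    ∫ x, g x ∂(μ.withDensity fun x => ENNReal.ofReal (Real.exp (ρ x)))
      = ∫ x, g x * Real.exp (ρ x) ∂μ := by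
  rw [integral_withDensity_eq_integral_toReal_smul (by fun_prop)
    (Eventually.of_forall fun _ => ENNReal.ofReal_lt_top)]
  simp_rw [ENNReal.toReal_ofReal (Real.exp_nonneg _), smul_eq_mul, mul_comm]

section Measure

variable {Ω : Type*} [TopologicalSpace Ω] [CompactSpace Ω] [MeasurableSpace Ω] [BorelSpace Ω]

lemma ContinuousMap.integrable_of_compactSpace {μ : Measure Ω} [IsFiniteMeasure μ]
    (g : C(Ω, ℝ)) : Integrable g μ :=
  (BoundedContinuousFunction.mkOfCompact g).integrable μ

lemma tendsto_integral_of_tendsto_continuousMap {μs : ℕ → Measure Ω} {μ : Measure Ω}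
    [∀ m, IsProbabilityMeasure (μs m)]
    (hweak : ∀ g : Ω → ℝ, Continuous g →
      Tendsto (fun m => ∫ x, g x ∂(μs m)) atTop (𝓝 (∫ x, g x ∂μ)))
    {G : ℕ → C(Ω, ℝ)} {G₀ : C(Ω, ℝ)} (hG : Tendsto G atTop (𝓝 G₀)) :
    Tendsto (fun m => ∫ x, G m x ∂(μs m)) atTop (𝓝 (∫ x, G₀ x ∂μ)) := by
  have hdiff : Tendsto (fun m => ∫ x, (G m - G₀) x ∂(μs m)) atTop (𝓝 0) := by
    refine squeeze_zero_norm (fun m => ?_) (tendsto_iff_norm_sub_tendsto_zero.1 hG)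
    simpa using norm_integral_le_of_norm_le_const (μ := μs m)
      (Eventually.of_forall fun x => (G m - G₀).norm_coe_le_norm x)
  rw [← zero_add (∫ x, G₀ x ∂μ)]
  refine (hdiff.add (hweak G₀ G₀.continuous)).congr fun m => ?_
  rw [ContinuousMap.coe_sub, integral_sub' (ContinuousMap.integrable_of_compactSpace _)
    (ContinuousMap.integrable_of_compactSpace _), sub_add_cancel]

lemma map_eq_withDensity_exp_iff [HasOuterApproxClosed Ω] {μ : Measure Ω} [IsFiniteMeasure μ]
    {φ : Ω → Ω} (hφ : Continuous φ) (ρ : C(Ω, ℝ)) :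
    μ.map φ = μ.withDensity (fun x => ENNReal.ofReal (Real.exp (ρ x))) ↔
      ∀ g : C(Ω, ℝ), ∫ x, g (φ x) ∂μ = ∫ x, g x * Real.exp (ρ x) ∂μ := by
  have hmap (g : C(Ω, ℝ)) : ∫ x, g x ∂(μ.map φ) = ∫ x, g (φ x) ∂μ :=
    integral_map hφ.aemeasurable g.continuous.aestronglyMeasurable
  have hρ : Measurable ρ := ρ.continuous.measurable
  refine ⟨fun h g => by rw [← hmap, h, integral_withDensity_exp _ hρ], fun h => ?_⟩
  have : IsFiniteMeasure (μ.withDensity fun x => ENNReal.ofReal (Real.exp (ρ x))) :=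
    isFiniteMeasure_withDensity_ofReal
      (ContinuousMap.integrable_of_compactSpace (.comp ⟨Real.exp, Real.continuous_exp⟩ ρ)).2
  refine ext_of_forall_integral_eq_of_IsFiniteMeasure fun g => ?_
  rw [integral_withDensity_exp _ hρ]
  exact (hmap g.toContinuousMap).trans (h g.toContinuousMap)

end Measure

lemma IsTopGibbs.map_eq_withDensity {d : ℕ} {A : Type*} [TopologicalSpace A] [MeasurableSpace A]
    {X : Set (Config d A)} {f : Config d A → ℝ} {μ : Measure ↥X} [IsFiniteMeasure μ]
    (h : IsTopGibbs d X f μ) {φ : ↥X ≃ₜ ↥X} (hφ : memF X φ) :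
    μ.map φ = μ.withDensity fun x => ENNReal.ofReal (Real.exp (phiF f x.1 (φ.symm x).1)) := by
  obtain ⟨hac, hrn⟩ := h φ hφ
  rw [← withDensity_congr_ae hrn, Measure.withDensity_rnDeriv_eq _ _ hac]

theorem topGibbs_weak_limit_general {d : ℕ} {A : Type*} [Fintype A]
    [TopologicalSpace A] [DiscreteTopology A] [MeasurableSpace A] [BorelSpace A]
    (X : Set (Config d A)) (hcl : IsClosed X)
    (hinv : ∀ k : Fin d → ℤ, ∀ x ∈ X, shift k x ∈ X)
    (fseq : ℕ → Config d A → ℝ) (f : Config d A → ℝ)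
    (hfseq : ∀ n, MemSV d X (fseq n)) (hf : MemSV d X f)
    (hconv : Tendsto (fun n => svNorm d X (fun x => fseq n x - f x)) atTop (nhds 0))
    (μseq : ℕ → Measure ↥X) (μ : Measure ↥X)
    (hμseqp : ∀ n, IsProbabilityMeasure (μseq n)) (hμp : IsProbabilityMeasure μ)
    (hweak : ∀ g : ↥X → ℝ, Continuous g →
      Tendsto (fun n => ∫ x, g x ∂(μseq n)) atTop (nhds (∫ x, g x ∂μ)))
    (hgibbs : ∀ n, IsTopGibbs d X (fseq n) (μseq n)) :
    IsTopGibbs d X f μ := by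
  have : CompactSpace ↥X := isCompact_iff_compactSpace.1 hcl.isCompact
  intro φ hφ
  obtain ⟨n, -, hφn⟩ := id hφ
  have hmoves (x : ↥X) (k : Fin d → ℤ) (hk : n < normInf k) : x.1 k = (φ.symm x).1 k := by
    simpa using hφn (φ.symm x) k hk
  let ρ (h : Config d A → ℝ) (hh : MemSV d X h) : C(↥X, ℝ) :=
    ⟨fun x => phiF h x.1 (φ.symm x).1, continuous_phiF_comp hinv hh φ.symm.continuous hmoves⟩
  have hρ : Tendsto (fun m => ρ _ (hfseq m)) atTop (𝓝 (ρ f hf)) :=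
    ContinuousMap.tendsto_iff_tendstoUniformly.2
      (tendstoUniformly_phiF_comp hinv hfseq hf hconv hmoves)
  have hmap : μ.map φ = μ.withDensity fun x => ENNReal.ofReal (Real.exp (ρ f hf x)) := by
    refine (map_eq_withDensity_exp_iff φ.continuous _).2 fun g =>
      tendsto_nhds_unique (hweak _ (g.continuous.comp φ.continuous)) ?_
    let E : C(ℝ, ℝ) := ⟨Real.exp, Real.continuous_exp⟩
    have hG : Tendsto (fun m => g * E.comp (ρ _ (hfseq m))) atTop (𝓝 (g * E.comp (ρ f hf))) :=
      tendsto_const_nhds.mul (((ContinuousMap.continuous_postcomp E).tendsto _).comp hρ)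
    refine (tendsto_integral_of_tendsto_continuousMap hweak hG).congr fun m => ?_
    exact ((map_eq_withDensity_exp_iff φ.continuous (ρ _ (hfseq m))).1
      ((hgibbs m).map_eq_withDensity hφ) g).symm
  rw [hmap]
  exact ⟨withDensity_absolutelyContinuous _ _, Measure.rnDeriv_withDensity _ (by fun_prop)⟩

/-- If `f_n → f` in the `SV_d`-norm, `μ_n → μ` weakly, and each `μ_n`
is a topological Gibbs measure for `f_n`, then `μ` is a topological Gibbs measure
for `f`. -/
theorem topGibbs_weak_limit {d : ℕ} (hd : 1 ≤ d) {A : Type*} [Fintype A] [Nonempty A]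
    [TopologicalSpace A] [DiscreteTopology A] [MeasurableSpace A] [BorelSpace A]
    (X : Set (Config d A)) (hne : X.Nonempty) (hcl : IsClosed X)
    (hinv : ∀ k : Fin d → ℤ, ∀ x ∈ X, shift k x ∈ X)
    (fseq : ℕ → Config d A → ℝ) (f : Config d A → ℝ)
    (hfseq : ∀ n, MemSV d X (fseq n)) (hf : MemSV d X f)
    (hconv : Tendsto (fun n => svNorm d X (fun x => fseq n x - f x)) atTop (nhds 0))
    (μseq : ℕ → Measure ↥X) (μ : Measure ↥X)
    (hμseqp : ∀ n, IsProbabilityMeasure (μseq n)) (hμp : IsProbabilityMeasure μ)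
    (hweak : ∀ g : ↥X → ℝ, Continuous g →
      Tendsto (fun n => ∫ x, g x ∂(μseq n)) atTop (nhds (∫ x, g x ∂μ)))
    (hgibbs : ∀ n, IsTopGibbs d X (fseq n) (μseq n)) :
    IsTopGibbs d X f μ :=
  topGibbs_weak_limit_general X hcl hinv fseq f hfseq hf hconv μseq μ hμseqp hμp hweak hgibbs
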